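/- (Proposition 1, SER bound for the variable-length encoder.) Let t ≥ 1, let B be a finite nonempty set of unit vectors in ℂ^t with a designated element x₀ ∈ B, let P ≥ 1, and set β = (t+1)·log P. Let q_B, q_B^v : ℂ^t → B be measurable maps such that: (i) for every h and every x ∈ B, |⟨q_B(h), h⟩| ≥ |⟨x, h⟩| (q_B is a maximum-SNR encoder for B); (ii) q_B^v(h) = x₀ whenever |⟨x, h⟩|²·P ≥ β for all x ∈ B, and q_B^v(h) = q_B(h) otherwise. Then ∫ Q(√(2·|⟨q_B^v(h), h⟩|²·P)) dμ(h) ≤ ∫ Q(√(2·|⟨q_B(h), h⟩|²·P)) dμ(h) + P^{−(t+1)}. -/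

import Mathlib

/-!
The two encoders differ only where every codeword of `B` already reaches SNR
`β = (t+1) log P`. There `q_B^v` sends `x₀ ∈ B`, whose error probability is at most
`Q(√(2β)) ≤ exp (-β) = P^{-(t+1)}` by the Chernoff bound `Q(x) ≤ exp (-x²/2)`. Hence the error
probability of `q_B^v` exceeds that of `q_B` by at most `P^{-(t+1)}` at every channel state `h`,
and integrating against the probability measure `CN(0, I_t)` gives the claim.
-/

open MeasureTheory

noncomputable instance (t : ℕ) : MeasureSpace (EuclideanSpace ℂ (Fin t)) where
  volume := Measure.map (WithLp.toLp 2) (volume : Measure (Fin t → ℂ))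

/-- The Gaussian tail function `Q(x) = (1/√(2π)) ∫_x^∞ exp(-u²/2) du`. -/
noncomputable def gaussianQ (x : ℝ) : ℝ :=
  (Real.sqrt (2 * Real.pi))⁻¹ * ∫ u in Set.Ioi x, Real.exp (-(u ^ 2) / 2)

/-- The standard complex Gaussian measure `CN(0, I_t)` on `ℂ^t`, with density
`h ↦ π^{-t} exp(-‖h‖²)` with respect to Lebesgue measure. -/
noncomputable def stdCGauss (t : ℕ) : Measure (EuclideanSpace ℂ (Fin t)) :=
  volume.withDensity fun h => ENNReal.ofReal ((Real.pi ^ t)⁻¹ * Real.exp (-‖h‖ ^ 2))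

open Real

lemma integral_exp_neg_sq_div_two : ∫ u : ℝ, exp (-(u ^ 2) / 2) = √(2 * π) := by
  have h := integral_gaussian (1 / 2)
  simp only [neg_mul, one_div, div_inv_eq_mul] at h
  simpa [div_eq_inv_mul, mul_comm] using h

lemma integrable_exp_neg_sq_div_two : Integrable fun u : ℝ => exp (-(u ^ 2) / 2) :=
  .of_integral_ne_zero (by rw [integral_exp_neg_sq_div_two]; positivity)

lemma gaussianQ_nonneg (x : ℝ) : 0 ≤ gaussianQ x :=
  mul_nonneg (by positivity) (setIntegral_nonneg measurableSet_Ioi fun _ _ => (exp_pos _).le)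

lemma gaussianQ_antitone : Antitone gaussianQ := fun _ _ hxy =>
  mul_le_mul_of_nonneg_left
    (setIntegral_mono_set integrable_exp_neg_sq_div_two.integrableOn
      (.of_forall fun _ => (exp_pos _).le) (.of_forall (Set.Ioi_subset_Ioi hxy)))
    (by positivity)

lemma gaussianQ_le_one (x : ℝ) : gaussianQ x ≤ 1 := by
  have hint : ∫ u in Set.Ioi x, exp (-(u ^ 2) / 2) ≤ √(2 * π) :=
    integral_exp_neg_sq_div_two ▸
      setIntegral_le_integral integrable_exp_neg_sq_div_two (.of_forall fun _ => (exp_pos _).le)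
  calc gaussianQ x ≤ (√(2 * π))⁻¹ * √(2 * π) := by unfold gaussianQ; gcongr
    _ = 1 := inv_mul_cancel₀ (by positivity)

lemma gaussianQ_le_exp {x : ℝ} (hx : 0 ≤ x) : gaussianQ x ≤ exp (-(x ^ 2) / 2) := by
  have hshift : ∫ u, exp (-((u - x) ^ 2) / 2) = √(2 * π) := by
    rw [integral_sub_right_eq_self (fun u => exp (-(u ^ 2) / 2)), integral_exp_neg_sq_div_two]
  have hint : ∫ u in Set.Ioi x, exp (-(u ^ 2) / 2) ≤ exp (-(x ^ 2) / 2) * √(2 * π) := by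
    -- for `u ≥ x ≥ 0`, `u² ≥ x² + (u - x)²`
    calc ∫ u in Set.Ioi x, exp (-(u ^ 2) / 2)
        ≤ ∫ u in Set.Ioi x, exp (-(x ^ 2) / 2) * exp (-((u - x) ^ 2) / 2) := by
          refine setIntegral_mono_on integrable_exp_neg_sq_div_two.integrableOn
            ((integrable_exp_neg_sq_div_two.comp_sub_right x).const_mul _).integrableOn
            measurableSet_Ioi fun u hu => ?_
          rw [← exp_add, exp_le_exp]
          nlinarith [mul_nonneg hx (sub_nonneg.2 (le_of_lt hu))]
      _ ≤ ∫ u, exp (-(x ^ 2) / 2) * exp (-((u - x) ^ 2) / 2) :=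
          setIntegral_le_integral
            ((integrable_exp_neg_sq_div_two.comp_sub_right x).const_mul _)
            (.of_forall fun _ => by positivity)
      _ = exp (-(x ^ 2) / 2) * √(2 * π) := by rw [integral_const_mul, hshift]
  calc gaussianQ x ≤ (√(2 * π))⁻¹ * (exp (-(x ^ 2) / 2) * √(2 * π)) := by
        unfold gaussianQ; gcongr
    _ = exp (-(x ^ 2) / 2) := by field_simp

lemma gaussianQ_sqrt_two_mul_le_exp_neg {a : ℝ} (ha : 0 ≤ a) :
    gaussianQ √(2 * a) ≤ exp (-a) := by
  have := gaussianQ_le_exp (sqrt_nonneg (2 * a))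
  rwa [sq_sqrt (by positivity), neg_div, mul_div_cancel_left₀ _ two_ne_zero] at this

lemma integrable_gaussianQ_comp {α : Type*} [MeasurableSpace α] {μ : Measure α}
    [IsFiniteMeasure μ] {φ : α → ℝ} (hφ : Measurable φ) :
    Integrable (fun a => gaussianQ (φ a)) μ :=
  .of_bound (gaussianQ_antitone.measurable.comp hφ).aestronglyMeasurable 1
    (.of_forall fun a => by
      rw [norm_of_nonneg (gaussianQ_nonneg _)]; exact gaussianQ_le_one _)

lemma integral_complexGaussianDensity : ∫ z : ℂ, π⁻¹ * exp (-‖z‖ ^ 2) = 1 := by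
  have h := GaussianFourier.integral_rexp_neg_mul_sq_norm (V := ℂ) one_pos
  simp only [neg_mul, one_mul, Complex.finrank_real_complex, div_one] at h
  rw [integral_const_mul, h]
  norm_num [pi_ne_zero]

lemma stdCGauss_density_eq_prod (t : ℕ) (h : EuclideanSpace ℂ (Fin t)) :
    (π ^ t)⁻¹ * exp (-‖h‖ ^ 2) = ∏ i, π⁻¹ * exp (-‖h i‖ ^ 2) := by
  rw [EuclideanSpace.norm_eq, sq_sqrt (by positivity), Finset.prod_mul_distrib,
    Finset.prod_const, ← exp_sum]
  simp [← inv_pow]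

lemma integral_stdCGauss_density (t : ℕ) :
    ∫ h : EuclideanSpace ℂ (Fin t), (π ^ t)⁻¹ * exp (-‖h‖ ^ 2) = 1 := by
  simp_rw [stdCGauss_density_eq_prod]
  change ∫ h, _ ∂(volume.map (MeasurableEquiv.toLp 2 (Fin t → ℂ))) = 1
  rw [integral_map_equiv, volume_pi]
  exact (integral_fintype_prod_eq_pow (ι := Fin t) fun z : ℂ => π⁻¹ * exp (-‖z‖ ^ 2)).trans
    (by rw [integral_complexGaussianDensity, one_pow])

instance isProbabilityMeasure_stdCGauss (t : ℕ) : IsProbabilityMeasure (stdCGauss t) where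
  measure_univ := by
    have hint := integral_stdCGauss_density t
    rw [stdCGauss, withDensity_apply _ MeasurableSet.univ, Measure.restrict_univ,
      ← ofReal_integral_eq_lintegral_ofReal
        (.of_integral_ne_zero (by rw [hint]; exact one_ne_zero))
        (.of_forall fun _ => by positivity), hint, ENNReal.ofReal_one]

lemma integral_le_integral_add_const {α : Type*} [MeasurableSpace α] {μ : Measure α}
    [IsProbabilityMeasure μ] {f g : α → ℝ} {c : ℝ} (hf : Integrable f μ) (hg : Integrable g μ)
    (hfg : ∀ a, f a ≤ g a + c) : ∫ a, f a ∂μ ≤ ∫ a, g a ∂μ + c :=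
  calc ∫ a, f a ∂μ ≤ ∫ a, (g a + c) ∂μ := integral_mono hf (hg.add (integrable_const c)) hfg
    _ = ∫ a, g a ∂μ + c := by rw [integral_add hg (integrable_const c), integral_const,
      probReal_univ, one_smul]

lemma exp_neg_mul_log_eq_inv_pow (n : ℕ) {P : ℝ} (hP : 0 < P) :
    exp (-(((n : ℝ) + 1) * log P)) = (P ^ (n + 1))⁻¹ := by
  rw [exp_neg, mul_comm, ← rpow_def_of_pos hP, ← Nat.cast_add_one, rpow_natCast]

theorem vlq_ser_bound_general (t : ℕ)
    (B : Finset (EuclideanSpace ℂ (Fin t)))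
    (x₀ : EuclideanSpace ℂ (Fin t)) (hx₀ : x₀ ∈ B)
    (P : ℝ) (hP : 1 ≤ P)
    (qB qBv : EuclideanSpace ℂ (Fin t) → EuclideanSpace ℂ (Fin t))
    (hqBmeas : Measurable qB) (hqBvmeas : Measurable qBv)
    (hv₀ : ∀ h, (∀ x ∈ B, ‖(inner ℂ x h : ℂ)‖ ^ 2 * P ≥ ((t : ℝ) + 1) * Real.log P) →
      qBv h = x₀)
    (hv₁ : ∀ h, ¬ (∀ x ∈ B, ‖(inner ℂ x h : ℂ)‖ ^ 2 * P ≥ ((t : ℝ) + 1) * Real.log P) →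
      qBv h = qB h) :
    ∫ h, gaussianQ (Real.sqrt (2 * ‖(inner ℂ (qBv h) h : ℂ)‖ ^ 2 * P)) ∂(stdCGauss t)
      ≤ (∫ h, gaussianQ (Real.sqrt (2 * ‖(inner ℂ (qB h) h : ℂ)‖ ^ 2 * P)) ∂(stdCGauss t))
        + (P ^ (t + 1))⁻¹ := by
  have hP₀ : 0 < P := by linarith
  rw [← exp_neg_mul_log_eq_inv_pow t hP₀]
  refine integral_le_integral_add_const (integrable_gaussianQ_comp (by fun_prop))
    (integrable_gaussianQ_comp (by fun_prop)) fun h => ?_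
  by_cases hS : ∀ x ∈ B, ‖(inner ℂ x h : ℂ)‖ ^ 2 * P ≥ ((t : ℝ) + 1) * log P
  · rw [hv₀ h hS, mul_assoc]
    calc gaussianQ √(2 * (‖(inner ℂ x₀ h : ℂ)‖ ^ 2 * P))
        ≤ exp (-(‖(inner ℂ x₀ h : ℂ)‖ ^ 2 * P)) := gaussianQ_sqrt_two_mul_le_exp_neg (by positivity)
      _ ≤ exp (-(((t : ℝ) + 1) * log P)) := exp_le_exp.2 (neg_le_neg (hS x₀ hx₀))
      _ ≤ _ := le_add_of_nonneg_left (gaussianQ_nonneg _)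
  · rw [hv₁ h hS]
    exact le_add_of_nonneg_right (exp_pos _).le

/-- Proposition 1 (SER bound): the variable-length encoder `q_B^v`, which uses the default
vector `x₀` whenever every codebook vector already provides SNR at least `β = (t+1) log P`,
loses at most `P^{-(t+1)}` in SER over the maximum-SNR encoder `q_B`. -/
theorem vlq_ser_bound (t : ℕ) (ht : 1 ≤ t)
    (B : Finset (EuclideanSpace ℂ (Fin t))) (hB : B.Nonempty)
    (hBunit : ∀ x ∈ B, ‖x‖ = 1)
    (x₀ : EuclideanSpace ℂ (Fin t)) (hx₀ : x₀ ∈ B)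
    (P : ℝ) (hP : 1 ≤ P)
    (qB qBv : EuclideanSpace ℂ (Fin t) → EuclideanSpace ℂ (Fin t))
    (hqBmeas : Measurable qB) (hqBvmeas : Measurable qBv)
    (hqBmem : ∀ h, qB h ∈ B) (hqBvmem : ∀ h, qBv h ∈ B)
    (hqBmax : ∀ h, ∀ x ∈ B, ‖(inner ℂ x h : ℂ)‖ ≤ ‖(inner ℂ (qB h) h : ℂ)‖)
    (hv₀ : ∀ h, (∀ x ∈ B, ‖(inner ℂ x h : ℂ)‖ ^ 2 * P ≥ ((t : ℝ) + 1) * Real.log P) →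
      qBv h = x₀)
    (hv₁ : ∀ h, ¬ (∀ x ∈ B, ‖(inner ℂ x h : ℂ)‖ ^ 2 * P ≥ ((t : ℝ) + 1) * Real.log P) →
      qBv h = qB h) :
    ∫ h, gaussianQ (Real.sqrt (2 * ‖(inner ℂ (qBv h) h : ℂ)‖ ^ 2 * P)) ∂(stdCGauss t)
      ≤ (∫ h, gaussianQ (Real.sqrt (2 * ‖(inner ℂ (qB h) h : ℂ)‖ ^ 2 * P)) ∂(stdCGauss t))
        + (P ^ (t + 1))⁻¹ :=
  vlq_ser_bound_general t B x₀ hx₀ P hP qB qBv hqBmeas hqBvmeas hv₀ hv₁
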